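/- Let P = diag(e^{iθ}, e^{-iθ}) with sin(θ) ≠ 0, and ζ_t = exp(t·F(P)). Then ζ_t = P if and only if there exists k ∈ ℤ with t·sin(θ) = θ + 2πk; in particular ζ_{θ/sin θ} = P. -/

import Mathlib

open Matrix Complex

/- The traceless part of `P = diag(e^{iθ}, e^{-iθ})` is `diag(i sin θ, -i sin θ)`, so
`ζ_t = diag(e^{i t sin θ}, e^{-i t sin θ})`. Hence `ζ_t = P` exactly when `e^{i t sin θ} = e^{iθ}`,
i.e. when `t sin θ` and `θ` differ by a multiple of `2π`; `t = θ / sin θ` is the case `k = 0`. -/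

noncomputable def Fvar (P : Matrix (Fin 2) (Fin 2) ℂ) : Matrix (Fin 2) (Fin 2) ℂ :=
  P - (P.trace / 2) • (1 : Matrix (Fin 2) (Fin 2) ℂ)

noncomputable def Pθ (θ : ℝ) : Matrix (Fin 2) (Fin 2) ℂ :=
  !![Complex.exp (I * θ), 0; 0, Complex.exp (-(I * θ))]

noncomputable def ζ (θ : ℝ) (t : ℝ) : Matrix (Fin 2) (Fin 2) ℂ :=
  NormedSpace.exp ((t : ℂ) • Fvar (Pθ θ))

lemma Fvar_diagonal (a b : ℂ) :
    Fvar (diagonal ![a, b]) = diagonal ![(a - b) / 2, -((a - b) / 2)] := by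
  ext i j
  fin_cases i <;> fin_cases j <;> simp [Fvar] <;> ring

lemma Pθ_eq_diagonal (θ : ℝ) : Pθ θ = diagonal ![exp (θ * I), exp (-(θ * I))] := by
  ext i j
  fin_cases i <;> fin_cases j <;> simp [Pθ, mul_comm I]

lemma exp_mul_I_sub_exp_neg_mul_I_div_two (z : ℂ) :
    (exp (z * I) - exp (-(z * I))) / 2 = sin z * I := by
  rw [sin, neg_mul]
  ring_nf
  rw [I_sq]
  ring

lemma ζ_eq_diagonal (θ t : ℝ) :
    ζ θ t = diagonal ![exp ((t * Real.sin θ : ℝ) * I), exp (-((t * Real.sin θ : ℝ) * I))] := by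
  rw [ζ, Pθ_eq_diagonal, Fvar_diagonal, exp_mul_I_sub_exp_neg_mul_I_div_two, ← ofReal_sin,
    ← diagonal_smul, exp_diagonal]
  ext i j
  fin_cases i <;> fin_cases j <;>
    simp [Pi.coe_exp, ← Complex.exp_eq_exp_ℂ, mul_assoc]

lemma diagonal_exp_exp_neg_inj {z w : ℂ} :
    diagonal ![exp z, exp (-z)] = diagonal ![exp w, exp (-w)] ↔ exp z = exp w := by
  refine ⟨fun h ↦ by simpa using congrFun (congrFun h 0) 0, fun h ↦ ?_⟩
  rw [exp_neg, exp_neg, h]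

lemma exp_ofReal_mul_I_inj {x y : ℝ} :
    exp (x * I) = exp (y * I) ↔ ∃ k : ℤ, x = y + 2 * Real.pi * k := by
  rw [← Circle.coe_exp, ← Circle.coe_exp, Circle.coe_inj, Circle.exp_eq_exp]
  simp only [mul_comm]

theorem zeta_eq_P_iff (θ : ℝ) (hθ : Real.sin θ ≠ 0) :
    (∀ t : ℝ, ζ θ t = Pθ θ ↔ ∃ k : ℤ, t * Real.sin θ = θ + 2 * Real.pi * k) ∧
    ζ θ (θ / Real.sin θ) = Pθ θ := by
  have key (t : ℝ) : ζ θ t = Pθ θ ↔ ∃ k : ℤ, t * Real.sin θ = θ + 2 * Real.pi * k := by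
    rw [ζ_eq_diagonal, Pθ_eq_diagonal, diagonal_exp_exp_neg_inj, exp_ofReal_mul_I_inj]
  exact ⟨key, (key _).2 ⟨0, by simp [div_mul_cancel₀ θ hθ]⟩⟩
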